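/- For every TUX game w on N and player j ∈ N, the average game of the Sobolev-reduced TUX game with respect to the MPW solution equals the Sobolev-reduced TU game of the average game with respect to the Shapley value: v̄_{w_{−j}^{So,MPW}}(S) = (s/(n−1))( v̄_w(S∪{j}) − Sh_j(v̄_w) ) + (1 − s/(n−1)) v̄_w(S) for all S ⊆ N\{j}. -/
import Mathlib


open Finset BigOperators

namespace TUX

/-- A (raw) game in partition function form: assigns a real worth to each
coalition together with a partition (of the outside players). -/
abbrev Game := Finset ℕ → Finset (Finset ℕ) → ℝ

/-- A TU game (characteristic function). -/
abbrev TUGame := Finset ℕ → ℝ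

/-- A solution for TUX games: given a player set and a game, assigns payoffs. -/
abbrev Sol := Finset ℕ → Game → ℕ → ℝ

/-- `w` is a genuine TUX game: the empty coalition has worth 0. -/
def IsTUX (w : Game) : Prop := ∀ π, w ∅ π = 0

/-- `π` is a partition of the finite set `M`. -/
def IsPartition (M : Finset ℕ) (π : Finset (Finset ℕ)) : Prop :=
  (∀ B ∈ π, B ⊆ M) ∧ ∅ ∉ π ∧ ∀ x ∈ M, (π.filter (fun B => x ∈ B)).card = 1

instance (M : Finset ℕ) : DecidablePred (IsPartition M) := fun π => by
  unfold IsPartition; infer_instance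

/-- The finite set of all partitions of `M`. -/
def partitionsOf (M : Finset ℕ) : Finset (Finset (Finset ℕ)) :=
  (M.powerset.powerset).filter (IsPartition M)

/-- The Ewens(θ = 1) probability of the partition `π` of `M`:
`p*_M(π) = ∏_{B ∈ π} (|B| - 1)! / |M|!`. -/
noncomputable def pstar (M : Finset ℕ) (π : Finset (Finset ℕ)) : ℝ :=
  (∏ B ∈ π, ((B.card - 1).factorial : ℝ)) / (M.card.factorial : ℝ)

/-- The block of `π` containing `j` (junk if `π` is not a partition containing `j`). -/
def blockOf (π : Finset (Finset ℕ)) (j : ℕ) : Finset ℕ :=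
  (π.filter (fun B => j ∈ B)).sup id

/-- Add player `i` to the block `B` of `π`. -/
def addToBlock (π : Finset (Finset ℕ)) (i : ℕ) (B : Finset ℕ) : Finset (Finset ℕ) :=
  insert (insert i B) (π.erase B)

/-- The restriction operator `r⋆` removing a single player `i` from a game on `N`:
`w₋ᵢ(S,π) = (1/(n-s)) (w(S, π₊ᵢ⇝∅) + ∑_{j ∈ N∖(S∪{i})} w(S, π₊ᵢ⇝π(j)))`. -/
noncomputable def restrict1 (N : Finset ℕ) (w : Game) (i : ℕ) : Game :=
  fun S π =>
    ((N.card : ℝ) - (S.card : ℝ))⁻¹ *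
      (w S (insert {i} π) + ∑ j ∈ (N \ S).erase i, w S (addToBlock π i (blockOf π j)))

/-- Iterated removal of a list of players. -/
noncomputable def restrictL : Finset ℕ → Game → List ℕ → Game
  | _, w, [] => w
  | N, w, i :: l => restrictL (N.erase i) (restrict1 N w i) l

/-- Removal of a set of players (via the increasing enumeration; by path
independence of `r⋆` the order is immaterial). -/
noncomputable def restrictSet (N : Finset ℕ) (w : Game) (T : Finset ℕ) : Game :=
  restrictL N w (T.sort (· ≤ ·))

/-- The average TU game `v̄_w` of a TUX game `w` on `N`. -/
noncomputable def avg (N : Finset ℕ) (w : Game) : TUGame :=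
  fun S => ∑ π ∈ partitionsOf (N \ S), pstar (N \ S) π * w S π

/-- The auxiliary TU game `v*_w(S) = w₋(N∖S)(S,∅)`. -/
noncomputable def auxGame (N : Finset ℕ) (w : Game) : TUGame :=
  fun S => restrictSet N w (N \ S) S ∅

/-- The Shapley value of a TU game on player set `N`. -/
noncomputable def shapley (N : Finset ℕ) (v : TUGame) (i : ℕ) : ℝ :=
  ∑ S ∈ (N.erase i).powerset,
    (((S.card.factorial : ℝ) * ((N.card - S.card - 1).factorial : ℝ)) / (N.card.factorial : ℝ)) *
      (v (insert i S) - v S)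

/-- The MPW solution: the Shapley value of the average game. -/
noncomputable def MPW (N : Finset ℕ) (w : Game) (i : ℕ) : ℝ := shapley N (avg N w) i

/-- The MPW solution as a solution for TUX games. -/
noncomputable def MPWsol : Sol := fun N w i => MPW N w i

/-- The scaled Dirac TUX game `δ_{T,τ}` on `N`. -/
noncomputable def scaledDirac (N T : Finset ℕ) (τ : Finset (Finset ℕ)) : Game :=
  fun S π => if S = T ∧ π = τ then (pstar (N \ T) τ)⁻¹ else 0

/-- `τ₋S`: remove the players of `S` from each block of `τ`, discarding empty blocks. -/
def partRemove (τ : Finset (Finset ℕ)) (S : Finset ℕ) : Finset (Finset ℕ) :=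
  (τ.image (fun B => B \ S)).erase ∅

/-- The Sobolev-reduced TUX game `w₋ⱼ^{So,φ}` on `N ∖ {j}`. -/
noncomputable def sobRed (N : Finset ℕ) (φ : Sol) (w : Game) (j : ℕ) : Game :=
  fun S π =>
    ((S.card : ℝ) / ((N.card : ℝ) - 1)) * (w (insert j S) π - φ N w j) +
      (1 - (S.card : ℝ) / ((N.card : ℝ) - 1)) * restrict1 N w j S π

/-- The Hart–Mas-Colell reduced TUX game `w₋T^{HM,φ}` on `N ∖ T`. -/
noncomputable def hmRed (N : Finset ℕ) (φ : Sol) (w : Game) (T : Finset ℕ) : Game :=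
  fun S π => w (S ∪ T) π - ∑ j ∈ T, φ (S ∪ T) (restrictSet N w (N \ (S ∪ T))) j

/-- Efficiency for TUX games. -/
def EfficientX (φ : Sol) : Prop :=
  ∀ (N : Finset ℕ) (w : Game), IsTUX w → ∑ i ∈ N, φ N w i = w N ∅

/-- Balanced contributions for TUX games (w.r.t. the restriction operator `r⋆`). -/
def BalancedContributionsX (φ : Sol) : Prop :=
  ∀ (N : Finset ℕ) (w : Game), IsTUX w → ∀ i ∈ N, ∀ j ∈ N,
    φ N w i - φ (N.erase j) (restrict1 N w j) i
      = φ N w j - φ (N.erase i) (restrict1 N w i) j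

/-- 2-standardness for TUX games. -/
def TwoStandardX (φ : Sol) : Prop :=
  ∀ i j : ℕ, i ≠ j → ∀ w : Game, IsTUX w →
    φ {i, j} w i
      = w {i} {({j} : Finset ℕ)}
        + (w {i, j} ∅ - w {j} {({i} : Finset ℕ)} - w {i} {({j} : Finset ℕ)}) / 2

/-- Sobolev consistency for TUX games. -/
def SobolevConsistentX (φ : Sol) : Prop :=
  ∀ (N : Finset ℕ) (w : Game), IsTUX w → ∀ i ∈ N, ∀ j ∈ N, i ≠ j →
    φ N w i = φ (N.erase j) (sobRed N φ w j) i

/-- Hart–Mas-Colell consistency (single-player removal) for TUX games. -/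
def HMConsistentX (φ : Sol) : Prop :=
  ∀ (N : Finset ℕ) (w : Game), IsTUX w → ∀ i ∈ N, ∀ j ∈ N, i ≠ j →
    φ N w i = φ (N.erase j) (hmRed N φ w {j}) i

/-- Set Hart–Mas-Colell consistency (removal of a coalition) for TUX games. -/
def SetHMConsistentX (φ : Sol) : Prop :=
  ∀ (N : Finset ℕ) (w : Game), IsTUX w → ∀ i ∈ N, ∀ T ⊆ N.erase i,
    φ N w i = φ (N \ T) (hmRed N φ w T) i

/-- The finite set of embedded coalitions `(T,τ)` of `N` with `T ≠ ∅`. -/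
def embeddedNE (N : Finset ℕ) : Finset (Finset ℕ × Finset (Finset ℕ)) :=
  (N.powerset ×ˢ N.powerset.powerset).filter
    (fun p => p.1.Nonempty ∧ IsPartition (N \ p.1) p.2)

section Aux

variable {M : Finset ℕ} {π σ : Finset (Finset ℕ)} {j x : ℕ} {B C : Finset ℕ}

lemma IsPartition.nonempty_of_mem (h : IsPartition M π) (hB : B ∈ π) : B.Nonempty :=
  Finset.nonempty_iff_ne_empty.2 fun he => h.2.1 (he ▸ hB)

lemma IsPartition.unique (h : IsPartition M π) (hB : B ∈ π) (hC : C ∈ π)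
    (hxB : x ∈ B) (hxC : x ∈ C) : B = C := by
  by_contra hne
  have hxM : x ∈ M := h.1 B hB hxB
  have h1 := h.2.2 x hxM
  have h2 : 1 < (π.filter (fun D => x ∈ D)).card :=
    Finset.one_lt_card.2 ⟨B, Finset.mem_filter.2 ⟨hB, hxB⟩, C, Finset.mem_filter.2 ⟨hC, hxC⟩, hne⟩
  omega

lemma IsPartition.blockOf_eq (h : IsPartition M π) (hB : B ∈ π) (hxB : x ∈ B) :
    blockOf π x = B := by
  have hf : π.filter (fun D => x ∈ D) = {B} := by
    rw [Finset.eq_singleton_iff_unique_mem]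
    exact ⟨Finset.mem_filter.2 ⟨hB, hxB⟩,
      fun C hC => h.unique (Finset.mem_filter.1 hC).1 hB (Finset.mem_filter.1 hC).2 hxB⟩
  rw [blockOf, hf, Finset.sup_singleton]
  rfl

lemma IsPartition.exists_block (h : IsPartition M π) (hx : x ∈ M) :
    ∃ B ∈ π, x ∈ B := by
  have h1 := h.2.2 x hx
  rw [Finset.card_eq_one] at h1
  obtain ⟨B, hB⟩ := h1
  have hBf : B ∈ π.filter (fun D => x ∈ D) := hB ▸ Finset.mem_singleton_self B
  exact ⟨B, (Finset.mem_filter.1 hBf).1, (Finset.mem_filter.1 hBf).2⟩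

lemma IsPartition.blockOf_mem (h : IsPartition M π) (hx : x ∈ M) :
    blockOf π x ∈ π ∧ x ∈ blockOf π x := by
  obtain ⟨B, hB, hxB⟩ := h.exists_block hx
  rw [h.blockOf_eq hB hxB]
  exact ⟨hB, hxB⟩

lemma isPartition_of_cover (hsub : ∀ B ∈ π, B ⊆ M) (hne : ∅ ∉ π)
    (hcov : ∀ x ∈ M, ∃ B ∈ π, x ∈ B ∧ ∀ C ∈ π, x ∈ C → C = B) :
    IsPartition M π := by
  refine ⟨hsub, hne, fun x hx => ?_⟩
  obtain ⟨B, hB, hxB, hu⟩ := hcov x hx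
  rw [Finset.card_eq_one]
  refine ⟨B, ?_⟩
  rw [Finset.eq_singleton_iff_unique_mem]
  exact ⟨Finset.mem_filter.2 ⟨hB, hxB⟩,
    fun C hC => hu C (Finset.mem_filter.1 hC).1 (Finset.mem_filter.1 hC).2⟩

lemma singleton_notMem (hj : j ∉ M) (h : IsPartition M π) : ({j} : Finset ℕ) ∉ π :=
  fun hc => hj (h.1 _ hc (Finset.mem_singleton_self j))

lemma mem_partitionsOf {M : Finset ℕ} {π : Finset (Finset ℕ)} :
    π ∈ partitionsOf M ↔ IsPartition M π := by
  simp only [partitionsOf, Finset.mem_filter, Finset.mem_powerset]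
  exact ⟨fun h => h.2, fun h => ⟨fun B hB => Finset.mem_powerset.2 (h.1 B hB), h⟩⟩

end Aux
section Aux2

variable {M : Finset ℕ} {π σ : Finset (Finset ℕ)} {j x : ℕ} {B C : Finset ℕ}

lemma isPartition_insert_singleton (hj : j ∉ M) (h : IsPartition M π) :
    IsPartition (insert j M) (insert {j} π) := by
  apply isPartition_of_cover
  · intro B hB
    rcases Finset.mem_insert.1 hB with rfl | hB
    · exact Finset.singleton_subset_iff.2 (Finset.mem_insert_self j M)
    · exact (h.1 B hB).trans (Finset.subset_insert j M)
  · intro hc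
    rcases Finset.mem_insert.1 hc with h1 | h1
    · exact Finset.singleton_ne_empty j h1.symm
    · exact h.2.1 h1
  · intro x hx
    rcases Finset.mem_insert.1 hx with hxj | hx
    · subst hxj
      refine ⟨{x}, Finset.mem_insert_self _ _, Finset.mem_singleton_self x, ?_⟩
      intro C hC hxC
      rcases Finset.mem_insert.1 hC with rfl | hC
      · rfl
      · exact absurd (h.1 C hC hxC) hj
    · obtain ⟨B, hB, hxB⟩ := h.exists_block hx
      refine ⟨B, Finset.mem_insert_of_mem hB, hxB, ?_⟩
      intro C hC hxC
      rcases Finset.mem_insert.1 hC with rfl | hC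
      · exact absurd ((Finset.mem_singleton.1 hxC) ▸ hx) hj
      · exact h.unique hC hB hxC hxB

lemma isPartition_addToBlock (hj : j ∉ M) (h : IsPartition M π) (hB : B ∈ π) :
    IsPartition (insert j M) (addToBlock π j B) := by
  have hjB : j ∉ B := fun hc => hj (h.1 B hB hc)
  apply isPartition_of_cover
  · intro C hC
    rcases Finset.mem_insert.1 hC with rfl | hC
    · exact Finset.insert_subset_insert j (h.1 B hB)
    · exact (h.1 C (Finset.mem_of_mem_erase hC)).trans (Finset.subset_insert j M)
  · intro hc
    rcases Finset.mem_insert.1 hc with h1 | h1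
    · exact (Finset.insert_ne_empty j B) h1.symm
    · exact h.2.1 (Finset.mem_of_mem_erase h1)
  · intro x hx
    rcases Finset.mem_insert.1 hx with hxj | hx
    · subst hxj
      refine ⟨insert x B, Finset.mem_insert_self _ _, Finset.mem_insert_self x B, ?_⟩
      intro C hC hxC
      rcases Finset.mem_insert.1 hC with rfl | hC
      · rfl
      · exact absurd (h.1 C (Finset.mem_of_mem_erase hC) hxC) hj
    · obtain ⟨B', hB', hxB'⟩ := h.exists_block hx
      have hxj : x ≠ j := fun hc => hj (hc ▸ hx)
      by_cases hBB : B' = B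
      · subst hBB
        refine ⟨insert j B', Finset.mem_insert_self _ _, Finset.mem_insert_of_mem hxB', ?_⟩
        intro C hC hxC
        rcases Finset.mem_insert.1 hC with rfl | hC
        · rfl
        · exact absurd (h.unique (Finset.mem_of_mem_erase hC) hB' hxC hxB')
            (Finset.ne_of_mem_erase hC)
      · refine ⟨B', Finset.mem_insert_of_mem (Finset.mem_erase.2 ⟨hBB, hB'⟩), hxB', ?_⟩
        intro C hC hxC
        rcases Finset.mem_insert.1 hC with rfl | hC
        · have hxB : x ∈ B := by
            rcases Finset.mem_insert.1 hxC with h1 | h1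
            · exact absurd h1 hxj
            · exact h1
          exact absurd (h.unique hB hB' hxB hxB') (fun e => hBB e.symm)
        · exact h.unique (Finset.mem_of_mem_erase hC) hB' hxC hxB'

lemma isPartition_erase_singleton (hj : j ∉ M) (h : IsPartition (insert j M) σ)
    (hjσ : ({j} : Finset ℕ) ∈ σ) : IsPartition M (σ.erase {j}) := by
  apply isPartition_of_cover
  · intro C hC x hxC
    have hCs := h.1 C (Finset.mem_of_mem_erase hC)
    have hxj : x ≠ j := by
      rintro rfl
      exact Finset.ne_of_mem_erase hC
        (h.unique (Finset.mem_of_mem_erase hC) hjσ hxC (Finset.mem_singleton_self x))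
    rcases Finset.mem_insert.1 (hCs hxC) with h1 | h1
    · exact absurd h1 hxj
    · exact h1
  · exact fun hc => h.2.1 (Finset.mem_of_mem_erase hc)
  · intro x hx
    obtain ⟨B, hB, hxB⟩ := h.exists_block (Finset.mem_insert_of_mem hx)
    have hBne : B ≠ {j} := by
      rintro rfl
      exact hj ((Finset.mem_singleton.1 hxB) ▸ hx)
    exact ⟨B, Finset.mem_erase.2 ⟨hBne, hB⟩, hxB, fun C hC hxC =>
      h.unique (Finset.mem_of_mem_erase hC) hB hxC hxB⟩

lemma isPartition_removeJ (hj : j ∉ M) (h : IsPartition (insert j M) σ)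
    (hB0 : B ∈ σ) (hjB0 : j ∈ B) (hne : B ≠ {j}) :
    IsPartition M (insert (B.erase j) (σ.erase B)) := by
  have hBej : (B.erase j).Nonempty := by
    rw [Finset.nonempty_iff_ne_empty]
    intro hc
    rcases (Finset.erase_eq_empty_iff B j).1 hc with h1 | h1
    · exact (h.nonempty_of_mem hB0).ne_empty h1
    · exact hne h1
  have hsubB : B.erase j ⊆ M := by
    intro x hx
    rcases Finset.mem_insert.1 (h.1 B hB0 (Finset.mem_of_mem_erase hx)) with h1 | h1
    · exact absurd h1 (Finset.ne_of_mem_erase hx)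
    · exact h1
  have hjC : ∀ C ∈ σ.erase B, j ∉ C := by
    intro C hC hjc
    exact Finset.ne_of_mem_erase hC (h.unique (Finset.mem_of_mem_erase hC) hB0 hjc hjB0)
  apply isPartition_of_cover
  · intro C hC
    rcases Finset.mem_insert.1 hC with rfl | hC
    · exact hsubB
    · intro x hx
      rcases Finset.mem_insert.1 (h.1 C (Finset.mem_of_mem_erase hC) hx) with h1 | h1
      · exact absurd (h1 ▸ hx) (hjC C hC)
      · exact h1
  · intro hc
    rcases Finset.mem_insert.1 hc with h1 | h1
    · exact hBej.ne_empty h1.symm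
    · exact h.2.1 (Finset.mem_of_mem_erase h1)
  · intro x hx
    have hxj : x ≠ j := fun hc => hj (hc ▸ hx)
    obtain ⟨B', hB', hxB'⟩ := h.exists_block (Finset.mem_insert_of_mem hx)
    by_cases hBB : B' = B
    · subst hBB
      refine ⟨B'.erase j, Finset.mem_insert_self _ _, Finset.mem_erase.2 ⟨hxj, hxB'⟩, ?_⟩
      intro C hC hxC
      rcases Finset.mem_insert.1 hC with rfl | hC
      · rfl
      · exact absurd (h.unique (Finset.mem_of_mem_erase hC) hB' hxC hxB')
          (Finset.ne_of_mem_erase hC)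
    · refine ⟨B', Finset.mem_insert_of_mem (Finset.mem_erase.2 ⟨hBB, hB'⟩), hxB', ?_⟩
      intro C hC hxC
      rcases Finset.mem_insert.1 hC with rfl | hC
      · exact absurd (h.unique hB0 hB' (Finset.mem_of_mem_erase hxC) hxB')
          (fun e => hBB e.symm)
      · exact h.unique (Finset.mem_of_mem_erase hC) hB' hxC hxB'

end Aux2
section Key

lemma key_sum (M : Finset ℕ) (j : ℕ) (hj : j ∉ M) (f : Finset (Finset ℕ) → ℝ) :
    ∑ σ ∈ partitionsOf (insert j M), pstar (insert j M) σ * f σ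
      = ∑ π ∈ partitionsOf M, pstar M π *
          (((M.card : ℝ) + 1)⁻¹ *
            (f (insert {j} π) + ∑ k ∈ M, f (addToBlock π j (blockOf π k)))) := by
  classical
  have hmfac : (insert j M).card = M.card + 1 := Finset.card_insert_of_notMem hj
  set g : Finset (Finset ℕ) × ℕ → Finset (Finset ℕ) :=
    fun p => if p.2 = j then insert {j} p.1 else addToBlock p.1 j (blockOf p.1 p.2) with hg
  have hgj : ∀ π : Finset (Finset ℕ), g (π, j) = insert {j} π := fun π => by
    simp [hg]
  have hgk : ∀ (π : Finset (Finset ℕ)) (k : ℕ), k ≠ j →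
      g (π, k) = addToBlock π j (blockOf π k) := fun π k hk => by
    simp [hg, hk]
  have hmaps : ∀ p ∈ partitionsOf M ×ˢ insert j M, g p ∈ partitionsOf (insert j M) := by
    rintro ⟨π, k⟩ hp
    rw [Finset.mem_product] at hp
    have hπ := mem_partitionsOf.1 hp.1
    by_cases hk : k = j
    · subst hk
      rw [hgj]
      exact mem_partitionsOf.2 (isPartition_insert_singleton hj hπ)
    · have hkM : k ∈ M := by
        rcases Finset.mem_insert.1 hp.2 with h1 | h1
        · exact absurd h1 hk
        · exact h1
      rw [hgk π k hk]
      exact mem_partitionsOf.2 (isPartition_addToBlock hj hπ (hπ.blockOf_mem hkM).1)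
  have hfib := Finset.sum_fiberwise_of_maps_to hmaps
      (fun p => pstar M p.1 * (((M.card : ℝ) + 1)⁻¹ * f (g p)))
  have hRHS : ∑ p ∈ partitionsOf M ×ˢ insert j M,
        pstar M p.1 * (((M.card : ℝ) + 1)⁻¹ * f (g p))
      = ∑ π ∈ partitionsOf M, pstar M π *
          (((M.card : ℝ) + 1)⁻¹ *
            (f (insert {j} π) + ∑ k ∈ M, f (addToBlock π j (blockOf π k)))) := by
    rw [Finset.sum_product]
    refine Finset.sum_congr rfl fun π _ => ?_
    rw [Finset.sum_insert hj, hgj]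
    rw [Finset.sum_congr rfl fun k hk => by rw [hgk π k (fun hc => hj (hc ▸ hk))]]
    rw [mul_add, mul_add, Finset.mul_sum, Finset.mul_sum]
  rw [← hRHS, ← hfib]
  refine Finset.sum_congr rfl fun σ hσ => ?_
  have hσP := mem_partitionsOf.1 hσ
  have hjmem : j ∈ insert j M := Finset.mem_insert_self j M
  obtain ⟨hB0mem, hjB0⟩ := hσP.blockOf_mem hjmem
  by_cases hB0 : blockOf σ j = {j}
  · -- singleton case
    have hjσ : ({j} : Finset ℕ) ∈ σ := hB0 ▸ hB0mem
    have hπσ : IsPartition M (σ.erase {j}) := isPartition_erase_singleton hj hσP hjσ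
    have hfilter : (partitionsOf M ×ˢ insert j M).filter (fun p => g p = σ)
        = {(σ.erase {j}, j)} := by
      rw [Finset.eq_singleton_iff_unique_mem]
      constructor
      · rw [Finset.mem_filter, Finset.mem_product]
        refine ⟨⟨mem_partitionsOf.2 hπσ, hjmem⟩, ?_⟩
        rw [hgj]
        exact Finset.insert_erase hjσ
      · rintro ⟨π, k⟩ hp
        rw [Finset.mem_filter, Finset.mem_product] at hp
        obtain ⟨⟨hπ, hk⟩, hgp⟩ := hp
        have hπP := mem_partitionsOf.1 hπ
        by_cases hkj : k = j
        · subst hkj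
          rw [hgj] at hgp
          rw [Prod.mk.injEq]
          exact ⟨by rw [← hgp, Finset.erase_insert (singleton_notMem hj hπP)], rfl⟩
        · exfalso
          have hkM : k ∈ M := by
            rcases Finset.mem_insert.1 hk with h1 | h1
            · exact absurd h1 hkj
            · exact h1
          rw [hgk π k hkj] at hgp
          obtain ⟨hBk, hkBk⟩ := hπP.blockOf_mem hkM
          have hσpart := isPartition_addToBlock hj hπP hBk
          rw [hgp] at hσpart
          have hblk : blockOf σ j = insert j (blockOf π k) := by
            rw [← hgp] at hσpart ⊢
            exact hσpart.blockOf_eq (Finset.mem_insert_self _ _) (Finset.mem_insert_self _ _)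
          rw [hblk] at hB0
          have hkj' : k ∈ ({j} : Finset ℕ) := hB0 ▸ Finset.mem_insert_of_mem hkBk
          exact hkj (Finset.mem_singleton.1 hkj')
    rw [hfilter, Finset.sum_singleton, hgj, Finset.insert_erase hjσ]
    have hprod : (∏ B ∈ σ, ((B.card - 1).factorial : ℝ))
        = ∏ B ∈ σ.erase {j}, ((B.card - 1).factorial : ℝ) := by
      rw [← Finset.mul_prod_erase σ _ hjσ]
      simp
    rw [pstar, pstar, hmfac, hprod, Nat.factorial_succ]
    have h1 : (M.card.factorial : ℝ) ≠ 0 := Nat.cast_ne_zero.2 (Nat.factorial_ne_zero M.card)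
    have h2 : ((M.card : ℝ) + 1) ≠ 0 := by positivity
    push_cast
    simp only [div_eq_mul_inv, mul_inv]
    ring
  · -- big block case
    set B0 := blockOf σ j with hB0def
    set πσ := insert (B0.erase j) (σ.erase B0) with hπσdef
    have hπσP : IsPartition M πσ := isPartition_removeJ hj hσP hB0mem hjB0 hB0
    have hBej : (B0.erase j).Nonempty := by
      rw [Finset.nonempty_iff_ne_empty]
      intro hc
      rcases (Finset.erase_eq_empty_iff B0 j).1 hc with h1 | h1
      · exact (hσP.nonempty_of_mem hB0mem).ne_empty h1
      · exact hB0 h1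
    have hBejM : B0.erase j ⊆ M := by
      intro x hx
      rcases Finset.mem_insert.1 (hσP.1 B0 hB0mem (Finset.mem_of_mem_erase hx)) with h1 | h1
      · exact absurd h1 (Finset.ne_of_mem_erase hx)
      · exact h1
    have hnm : B0.erase j ∉ σ.erase B0 := by
      intro hc
      obtain ⟨y, hy⟩ := hBej
      exact Finset.ne_of_mem_erase hc
        (hσP.unique (Finset.mem_of_mem_erase hc) hB0mem hy (Finset.mem_of_mem_erase hy))
    have hrecon : addToBlock πσ j (B0.erase j) = σ := by
      show insert (insert j (B0.erase j)) (πσ.erase (B0.erase j)) = σ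
      rw [hπσdef, Finset.erase_insert hnm, Finset.insert_erase hjB0,
        Finset.insert_erase hB0mem]
    have hfilter : (partitionsOf M ×ˢ insert j M).filter (fun p => g p = σ)
        = {πσ} ×ˢ (B0.erase j) := by
      ext ⟨π, k⟩
      rw [Finset.mem_filter, Finset.mem_product, Finset.mem_product, Finset.mem_singleton]
      constructor
      · rintro ⟨⟨hπ, hk⟩, hgp⟩
        have hπP := mem_partitionsOf.1 hπ
        by_cases hkj : k = j
        · exfalso
          subst hkj
          rw [hgj] at hgp
          have hbs : blockOf σ k = {k} := by
            rw [← hgp]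
            exact (isPartition_insert_singleton hj hπP).blockOf_eq
              (Finset.mem_insert_self _ _) (Finset.mem_singleton_self k)
          exact hB0 hbs
        · have hkM : k ∈ M := by
            rcases Finset.mem_insert.1 hk with h1 | h1
            · exact absurd h1 hkj
            · exact h1
          rw [hgk π k hkj] at hgp
          obtain ⟨hBk, hkBk⟩ := hπP.blockOf_mem hkM
          have hjBk : j ∉ blockOf π k := fun hc => hj (hπP.1 _ hBk hc)
          have hblk : B0 = insert j (blockOf π k) := by
            rw [hB0def, ← hgp]
            exact (isPartition_addToBlock hj hπP hBk).blockOf_eq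
              (Finset.mem_insert_self _ _) (Finset.mem_insert_self _ _)
          have e1 : B0.erase j = blockOf π k := by
            rw [hblk, Finset.erase_insert hjBk]
          have e2 : σ.erase B0 = π.erase (blockOf π k) := by
            rw [hblk, ← hgp]
            show (insert (insert j (blockOf π k)) (π.erase (blockOf π k))).erase
                (insert j (blockOf π k)) = π.erase (blockOf π k)
            apply Finset.erase_insert
            intro hc
            exact hj (hπP.1 _ (Finset.mem_of_mem_erase hc) (Finset.mem_insert_self j _))
          constructor
          · rw [hπσdef, e1, e2, Finset.insert_erase hBk]
          · rw [e1]
            exact hkBk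
      · rintro ⟨hπ, hk⟩
        subst hπ
        have hkj : k ≠ j := Finset.ne_of_mem_erase hk
        have hkM : k ∈ M := hBejM hk
        refine ⟨⟨mem_partitionsOf.2 hπσP, Finset.mem_insert_of_mem hkM⟩, ?_⟩
        rw [hgk πσ k hkj,
          hπσP.blockOf_eq (Finset.mem_insert_self _ _) hk, hrecon]
    have hgval : ∀ k ∈ B0.erase j, g (πσ, k) = σ := by
      intro k hk
      rw [hgk πσ k (Finset.ne_of_mem_erase hk),
        hπσP.blockOf_eq (Finset.mem_insert_self _ _) hk, hrecon]
    have hsum := Finset.sum_eq_card_nsmul (s := B0.erase j)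
      (f := fun k => pstar M (πσ, k).1 * (((M.card : ℝ) + 1)⁻¹ * f (g (πσ, k))))
      (b := pstar M πσ * (((M.card : ℝ) + 1)⁻¹ * f σ))
      (fun k hk => by simp [hgval k hk])
    rw [hfilter, Finset.sum_product, Finset.sum_singleton, hsum, nsmul_eq_mul]
    have hcardB : B0.card - 1 = (B0.erase j).card := by
      rw [Finset.card_erase_of_mem hjB0]
    have hbpos : 0 < (B0.erase j).card := Finset.card_pos.2 hBej
    have hpσ : (∏ B ∈ σ, ((B.card - 1).factorial : ℝ))
        = (((B0.erase j).card).factorial : ℝ) *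
            ∏ B ∈ σ.erase B0, ((B.card - 1).factorial : ℝ) := by
      rw [← Finset.mul_prod_erase σ _ hB0mem, hcardB]
    have hpπ : (∏ B ∈ πσ, ((B.card - 1).factorial : ℝ))
        = ((((B0.erase j).card) - 1).factorial : ℝ) *
            ∏ B ∈ σ.erase B0, ((B.card - 1).factorial : ℝ) := by
      rw [hπσdef, Finset.prod_insert hnm]
    have hbfac : (((B0.erase j).card).factorial : ℝ)
        = ((B0.erase j).card : ℝ) * ((((B0.erase j).card) - 1).factorial : ℝ) := by
      obtain ⟨b', hb'⟩ : ∃ b', (B0.erase j).card = b' + 1 :=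
        ⟨(B0.erase j).card - 1, (Nat.succ_pred_eq_of_pos hbpos).symm⟩
      rw [hb', Nat.factorial_succ]
      push_cast
      simp
    rw [pstar, pstar, hmfac, hpσ, hpπ, Nat.factorial_succ, hbfac]
    have h1 : (M.card.factorial : ℝ) ≠ 0 := Nat.cast_ne_zero.2 (Nat.factorial_ne_zero M.card)
    have h2 : ((M.card : ℝ) + 1) ≠ 0 := by positivity
    push_cast
    simp only [div_eq_mul_inv, mul_inv]
    ring

end Key
lemma partitionsOf_empty : partitionsOf (∅ : Finset ℕ) = {∅} := by
  ext π
  rw [mem_partitionsOf, Finset.mem_singleton]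
  constructor
  · intro h
    by_contra hne
    obtain ⟨B, hB⟩ := Finset.nonempty_iff_ne_empty.2 hne
    have hBe : B = ∅ := Finset.subset_empty.1 (h.1 B hB)
    exact h.2.1 (hBe ▸ hB)
  · rintro rfl
    exact ⟨fun B hB => absurd hB (Finset.notMem_empty B),
      Finset.notMem_empty _, fun x hx => absurd hx (Finset.notMem_empty x)⟩

lemma pstar_sum (M : Finset ℕ) : ∑ π ∈ partitionsOf M, pstar M π = 1 := by
  induction M using Finset.induction_on with
  | empty =>
    rw [partitionsOf_empty, Finset.sum_singleton, pstar]
    simp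
  | @insert a s ha ih =>
    have hkey := key_sum s a ha (fun _ => 1)
    simp only [mul_one] at hkey
    rw [hkey]
    have hv : (((s.card : ℝ) + 1)⁻¹ * (1 + ∑ _k ∈ s, (1 : ℝ))) = 1 := by
      rw [Finset.sum_const, nsmul_eq_mul, mul_one, add_comm]
      exact inv_mul_cancel₀ (by positivity)
    simp only [hv, mul_one]
    exact ih

lemma alg_split {α : Type*} (s : Finset α) (p X Y : α → ℝ) (a c : ℝ)
    (hp : ∑ i ∈ s, p i = 1) :
    ∑ i ∈ s, p i * (a * (X i - c) + (1 - a) * Y i)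
      = a * ((∑ i ∈ s, p i * X i) - c) + (1 - a) * ∑ i ∈ s, p i * Y i := by
  have h : ∀ i ∈ s, p i * (a * (X i - c) + (1 - a) * Y i)
      = a * (p i * X i) - (a * c) * p i + (1 - a) * (p i * Y i) := fun i _ => by ring
  rw [Finset.sum_congr rfl h, Finset.sum_add_distrib, Finset.sum_sub_distrib,
    ← Finset.mul_sum, ← Finset.mul_sum, ← Finset.mul_sum, hp, mul_one]
  ring
end TUX
open TUX in
/-- The average game of the Sobolev-reduced TUX game (w.r.t. MPW)
is the Sobolev-reduced TU game of the average game (w.r.t. the Shapley value). -/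
theorem avg_sobRed (N : Finset ℕ) (w : Game) (hw : IsTUX w) (j : ℕ) (hj : j ∈ N) :
    ∀ S ⊆ N.erase j,
      avg (N.erase j) (sobRed N MPWsol w j) S
        = ((S.card : ℝ) / ((N.card : ℝ) - 1)) * (avg N w (insert j S) - shapley N (avg N w) j)
          + (1 - (S.card : ℝ) / ((N.card : ℝ) - 1)) * avg N w S := by
  intro S hS
  have hSN : S ⊆ N := hS.trans (Finset.erase_subset j N)
  have hjS : j ∉ S := fun h => (Finset.mem_erase.1 (hS h)).1 rfl
  set M : Finset ℕ := (N.erase j) \ S with hMdef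
  have hjM : j ∉ M := fun h => (Finset.mem_erase.1 (Finset.mem_sdiff.1 h).1).1 rfl
  have hins : insert j M = N \ S := by
    ext x
    simp only [hMdef, Finset.mem_insert, Finset.mem_sdiff, Finset.mem_erase]
    constructor
    · rintro (rfl | ⟨⟨_, hxN⟩, hxS⟩)
      · exact ⟨hj, hjS⟩
      · exact ⟨hxN, hxS⟩
    · rintro ⟨hxN, hxS⟩
      by_cases hxj : x = j
      · exact Or.inl hxj
      · exact Or.inr ⟨⟨hxj, hxN⟩, hxS⟩
  have hNjS : N \ insert j S = M := by
    ext x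
    simp only [hMdef, Finset.mem_sdiff, Finset.mem_insert, Finset.mem_erase]
    tauto
  have hersj : (N \ S).erase j = M := by rw [← hins, Finset.erase_insert hjM]
  have hcard : (N.card : ℝ) - (S.card : ℝ) = (M.card : ℝ) + 1 := by
    have h1 : (N \ S).card = N.card - S.card := Finset.card_sdiff_of_subset hSN
    have h2 : (N \ S).card = M.card + 1 := by
      rw [← hins, Finset.card_insert_of_notMem hjM]
    have h3 : S.card ≤ N.card := Finset.card_le_card hSN
    have h4 : N.card = S.card + (M.card + 1) := by omega
    rw [h4]
    push_cast
    ring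
  have hrestrict : ∀ π, restrict1 N w j S π
      = ((M.card : ℝ) + 1)⁻¹ *
          (w S (insert {j} π) + ∑ k ∈ M, w S (addToBlock π j (blockOf π k))) := by
    intro π
    show ((N.card : ℝ) - (S.card : ℝ))⁻¹ *
        (w S (insert {j} π) + ∑ k ∈ (N \ S).erase j, w S (addToBlock π j (blockOf π k))) = _
    rw [hcard, hersj]
  have hLHS : avg (N.erase j) (sobRed N MPWsol w j) S
      = ∑ π ∈ partitionsOf M, pstar M π *
          (((S.card : ℝ) / ((N.card : ℝ) - 1)) *
              (w (insert j S) π - shapley N (avg N w) j)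
            + (1 - (S.card : ℝ) / ((N.card : ℝ) - 1)) *
              (((M.card : ℝ) + 1)⁻¹ *
                (w S (insert {j} π) + ∑ k ∈ M, w S (addToBlock π j (blockOf π k))))) := by
    show ∑ π ∈ partitionsOf M, pstar M π * sobRed N MPWsol w j S π = _
    refine Finset.sum_congr rfl fun π _ => ?_
    rw [sobRed, hrestrict π]
    rfl
  have e1 : avg N w (insert j S) = ∑ π ∈ partitionsOf M, pstar M π * w (insert j S) π := by
    show ∑ π ∈ partitionsOf (N \ insert j S), pstar (N \ insert j S) π * w (insert j S) π = _
    rw [hNjS]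
  have e2 : avg N w S = ∑ π ∈ partitionsOf M, pstar M π *
      (((M.card : ℝ) + 1)⁻¹ *
        (w S (insert {j} π) + ∑ k ∈ M, w S (addToBlock π j (blockOf π k)))) := by
    show ∑ π ∈ partitionsOf (N \ S), pstar (N \ S) π * w S π = _
    rw [← hins]
    exact key_sum M j hjM (fun π => w S π)
  rw [hLHS, e1, e2]
  exact alg_split (partitionsOf M) (pstar M) (fun π => w (insert j S) π)
    (fun π => ((M.card : ℝ) + 1)⁻¹ *
      (w S (insert {j} π) + ∑ k ∈ M, w S (addToBlock π j (blockOf π k))))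
    ((S.card : ℝ) / ((N.card : ℝ) - 1)) (shapley N (avg N w) j) (pstar_sum M)
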